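/- Fix an integer r ≥ 3 and let {T_n^{(r)}} be the generalized r-tribonacci numbers. For every integer n ≥ 2, the Toeplitz–Hessenberg determinant det(1; T_{r+1}^{(r)}, T_{r+2}^{(r)}, …, T_{n+r}^{(r)}) equals Σ_{i=0}^{⌊n/(r−1)⌋} (−1)^{r·i} · C(n−(r−2)i, i). -/

import Mathlib

/-- The determinant of the `n × n` Toeplitz–Hessenberg matrix whose `(i,j)` entry
(0-indexed) is `a (i - j + 1)` when `j ≤ i + 1` (so `a 0` lies on the superdiagonal
and `a k` on the `k`-th subdiagonal) and `0` otherwise. -/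
def THdet (a : ℕ → ℤ) (n : ℕ) : ℤ :=
  (Matrix.of fun i j : Fin n => if (j : ℕ) ≤ (i : ℕ) + 1 then a ((i : ℕ) + 1 - (j : ℕ)) else 0).det

/-!
Expanding a Toeplitz–Hessenberg determinant `D_n` with `a_0 = 1` along its first column gives
Trudi's recursion, which says that `∑ D_n x^n` is the inverse of `P(x) = ∑ (-1)^k a_k x^k`.
For `a_k = T_{k+r}` the recurrence of `T` gives `Q(y) (1 - y - y² - y^r) = 1 + y + y^(r-1)` for
`Q(y) = ∑ T_{k+r} y^k`, and `P(x) = Q(-x)`. On the other side, the binomial sum `S_n` of the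
theorem is the coefficient of `x^n` in `1 / (1 - x - (-1)^r x^(r-1))`. Since
`1 + x - x² - (-1)^r x^r = 1 + x (1 - x - (-1)^r x^(r-1))`, these identities combine to
`∑ D_n x^n = ∑ S_n x^n + x`.
-/

open PowerSeries

def toeplitzHessenberg (a : ℕ → ℤ) (n : ℕ) : Matrix (Fin n) (Fin n) ℤ :=
  Matrix.of fun i j : Fin n => if (j : ℕ) ≤ (i : ℕ) + 1 then a ((i : ℕ) + 1 - (j : ℕ)) else 0

theorem THdet_zero (a : ℕ → ℤ) : THdet a 0 = 1 := Matrix.det_isEmpty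

namespace toeplitzHessenberg

variable (a : ℕ → ℤ)

theorem det_eq (n : ℕ) : (toeplitzHessenberg a n).det = THdet a n := rfl

theorem submatrix_succ_succ (n : ℕ) :
    (toeplitzHessenberg a (n + 1)).submatrix Fin.succ Fin.succ = toeplitzHessenberg a n := by
  ext i j
  simp only [toeplitzHessenberg, Matrix.submatrix_apply, Matrix.of_apply, Fin.val_succ]
  rw [show (i : ℕ) + 1 + 1 - (j + 1) = i + 1 - j by omega]
  simp only [add_le_add_iff_right]

/-- Deleting row `i` and column `0` leaves a block triangular matrix whose upper block is
triangular with `a 0` on the diagonal. -/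
theorem det_submatrix_succAbove_succ (n : ℕ) (i : Fin (n + 1)) :
    ((toeplitzHessenberg a (n + 1)).submatrix i.succAbove Fin.succ).det =
      a 0 ^ (i : ℕ) * THdet a (n - i) := by
  induction n with
  | zero =>
    rw [Fin.fin_one_eq_zero i, Matrix.det_isEmpty, Fin.val_zero, pow_zero, THdet_zero, one_mul]
  | succ n ih =>
    cases i using Fin.cases with
    | zero => simp [submatrix_succ_succ, det_eq]
    | succ j =>
      set N := (toeplitzHessenberg a (n + 2)).submatrix j.succ.succAbove Fin.succ
      have hrow : ∀ l : Fin n, N 0 l.succ = 0 := by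
        intro l
        simp [N, toeplitzHessenberg]
      have hminor : N.submatrix Fin.succ (Fin.succAbove 0) =
          (toeplitzHessenberg a (n + 1)).submatrix j.succAbove Fin.succ := by
        ext i l
        simp [N, toeplitzHessenberg, Fin.succ_succAbove_succ]
      have hcorner : N 0 0 = a 0 := by simp [N, toeplitzHessenberg]
      rw [Matrix.det_succ_row_zero, Fin.sum_univ_succ]
      simp only [hrow, mul_zero, zero_mul, Finset.sum_const_zero, add_zero, hminor, ih, hcorner,
        Fin.val_zero, Fin.val_succ, Nat.add_sub_add_right]
      ring

end toeplitzHessenberg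

theorem THdet_succ (a : ℕ → ℤ) (n : ℕ) :
    THdet a (n + 1) = ∑ k ∈ Finset.range (n + 1), (-a 0) ^ k * a (k + 1) * THdet a (n - k) := by
  rw [← toeplitzHessenberg.det_eq, Matrix.det_succ_column_zero, ← Fin.sum_univ_eq_sum_range]
  refine Finset.sum_congr rfl fun i _ => ?_
  have hcol : toeplitzHessenberg a (n + 1) i 0 = a (i + 1) := by simp [toeplitzHessenberg]
  rw [toeplitzHessenberg.det_submatrix_succAbove_succ, hcol, neg_pow]
  ring

theorem mk_neg_pow_mul_mk_THdet (a : ℕ → ℤ) (ha : a 0 = 1) :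
    mk (fun k => (-1) ^ k * a k) * mk (THdet a) = 1 := by
  ext n
  rw [coeff_mul, Finset.Nat.sum_antidiagonal_eq_sum_range_succ_mk, coeff_one]
  cases n with
  | zero => simp [ha, THdet_zero]
  | succ n =>
    simp only [Finset.sum_range_succ', coeff_mk, Nat.sub_zero, Nat.reduceSubDiff, THdet_succ, ha,
      if_neg n.succ_ne_zero]
    simp only [pow_succ, mul_neg_one, neg_mul, Finset.sum_neg_distrib]
    ring

theorem Nat.choose_sub_mul_eq_zero {n k i : ℕ} (h : n < k * i) :
    (n - (k - 1) * i).choose i = 0 := by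
  have hi : i ≠ 0 := by rintro rfl; simp at h
  obtain ⟨k, rfl⟩ := Nat.exists_eq_add_one_of_ne_zero (show k ≠ 0 by rintro rfl; simp at h)
  apply Nat.choose_eq_zero_of_lt
  rw [add_mul, one_mul] at h
  rw [Nat.add_sub_cancel]
  omega

theorem Nat.choose_sub_mul_succ {n k i : ℕ} (hk : 0 < k) (hkn : k ≤ n + 1) :
    (n + 1 - (k - 1) * (i + 1)).choose (i + 1) =
      (n - (k - 1) * (i + 1)).choose (i + 1) + (n + 1 - k - (k - 1) * i).choose i := by
  obtain ⟨k, rfl⟩ : ∃ k', k = k' + 1 := ⟨k - 1, by omega⟩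
  simp only [Nat.add_sub_cancel, mul_add, mul_one]
  by_cases h : k * i + k ≤ n
  · rw [show n + 1 - (k * i + k) = n - (k * i + k) + 1 by omega, Nat.choose_succ_succ',
      show n + 1 - (k + 1) - k * i = n - (k * i + k) by omega, add_comm]
  · have hi : 0 < i := Nat.pos_of_ne_zero (by rintro rfl; omega)
    rw [show n + 1 - (k * i + k) = 0 by omega, show n - (k * i + k) = 0 by omega,
      Nat.choose_zero_succ, Nat.choose_eq_zero_of_lt (by omega)]

section DiagChooseSum

variable {R : Type*} [CommRing R] (c : R) {k : ℕ}

/-- The weighted number of compositions of `n` into parts `1` and `k`, a part `k` having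
weight `c`: there are `C(n - (k - 1) i, i)` compositions with `i` parts equal to `k`. -/
def diagChooseSum (c : R) (k n : ℕ) : R :=
  ∑ i ∈ Finset.range (n / k + 1), c ^ i * ((n - (k - 1) * i).choose i : R)

theorem diagChooseSum_eq_sum_range (hk : 0 < k) {n N : ℕ} (hN : n / k < N) :
    diagChooseSum c k n = ∑ i ∈ Finset.range N, c ^ i * ((n - (k - 1) * i).choose i : R) := by
  refine Finset.sum_subset (Finset.range_subset_range.mpr hN) fun i _ hi => ?_
  rw [Finset.mem_range, not_lt, Nat.succ_le_iff, Nat.div_lt_iff_lt_mul hk, mul_comm] at hi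
  rw [Nat.choose_sub_mul_eq_zero hi, Nat.cast_zero, mul_zero]

theorem diagChooseSum_succ (hk : 0 < k) {n : ℕ} (hkn : k ≤ n + 1) :
    diagChooseSum c k (n + 1) = diagChooseSum c k n + c * diagChooseSum c k (n + 1 - k) := by
  have hterm : ∀ i, c ^ (i + 1) * ((n + 1 - (k - 1) * (i + 1)).choose (i + 1) : R) =
      c ^ (i + 1) * ((n - (k - 1) * (i + 1)).choose (i + 1) : R) +
        c * (c ^ i * ((n + 1 - k - (k - 1) * i).choose i : R)) := fun i => by
    rw [Nat.choose_sub_mul_succ hk hkn]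
    push_cast
    ring
  rw [diagChooseSum_eq_sum_range c hk (N := n + 2) (Nat.lt_succ_of_le (Nat.div_le_self _ _)),
    diagChooseSum_eq_sum_range c hk (N := n + 2) ((Nat.div_le_self _ _).trans_lt (by omega)),
    diagChooseSum_eq_sum_range c hk (N := n + 1) ((Nat.div_le_self _ _).trans_lt (by omega)),
    Finset.sum_range_succ', Finset.sum_range_succ' _ (n + 1), Finset.mul_sum,
    Finset.sum_congr rfl fun i _ => hterm i, Finset.sum_add_distrib]
  simp only [pow_zero, mul_zero, Nat.sub_zero, Nat.choose_zero_right]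
  ring

theorem mk_diagChooseSum_mul (hk : 0 < k) :
    mk (diagChooseSum c k) * (1 - X - C c * X ^ k) = 1 := by
  ext n
  rw [mul_sub, mul_sub, mul_one, map_sub, map_sub, mul_left_comm, coeff_C_mul, coeff_mul_X_pow',
    coeff_one, coeff_mk]
  cases n with
  | zero => simp [diagChooseSum, hk.ne']
  | succ n =>
    rw [coeff_succ_mul_X, coeff_mk, coeff_mk]
    by_cases hkn : k ≤ n + 1
    · rw [if_pos hkn, diagChooseSum_succ c hk hkn]
      simp
    · have hsmall : ∀ m, m < k → diagChooseSum c k m = 1 := fun m hm => by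
        simp [diagChooseSum, Nat.div_eq_of_lt hm]
      rw [if_neg hkn, hsmall n (by omega), hsmall (n + 1) (by omega)]
      simp

end DiagChooseSum

theorem mk_tribonacci_shift_mul {r : ℕ} (hr : 2 ≤ r) {T : ℕ → ℤ}
    (hT0 : ∀ k, k < r - 1 → T k = 0) (hT1 : T (r - 1) = 1)
    (hTrec : ∀ n, r ≤ n → T n = T (n - 1) + T (n - 2) + T (n - r)) :
    mk (fun k => T (k + r)) * (1 - X - X ^ 2 - X ^ r) = 1 + X + X ^ (r - 1) := by
  have hinit : ∀ m < r, T m = if m = r - 1 then 1 else 0 := fun m hm => by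
    split_ifs with h
    · rw [h, hT1]
    · exact hT0 m (by omega)
  have hstep : ∀ m, T (m + r) = T (m + r - 1) + T (m + r - 2) + T m := fun m => by
    rw [hTrec (m + r) (by omega), Nat.add_sub_cancel]
  ext n
  simp only [mul_sub, mul_one, map_sub, map_add, coeff_mk, coeff_one, coeff_X, coeff_X_pow,
    coeff_mul_X_pow']
  rcases n with _ | _ | m
  · have h := hstep 0
    rw [zero_add, hT1, hT0 (r - 2) (by omega), hT0 0 (by omega)] at h
    rw [coeff_zero_mul_X, zero_add, if_neg (by omega), if_neg (by omega), if_pos rfl,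
      if_neg zero_ne_one, if_neg (by omega), h]
    ring
  · have h := hstep 1
    rw [Nat.add_sub_cancel_left, show 1 + r - 2 = r - 1 by omega, hT1, hinit 1 (by omega)] at h
    rw [coeff_succ_mul_X, coeff_mk, zero_add, zero_add, if_neg (by omega), if_neg (by omega),
      if_neg one_ne_zero, if_pos rfl, h]
    split_ifs <;> ring
  · have h := hstep (m + 2)
    rw [show m + 2 + r - 1 = m + 1 + r by omega, show m + 2 + r - 2 = m + r by omega] at h
    rw [coeff_succ_mul_X, coeff_mk, if_pos (by omega), show m + 1 + 1 - 2 + r = m + r by omega,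
      show m + 1 + 1 + r = m + 2 + r by omega, h, if_neg (show m + 1 + 1 ≠ 0 by omega),
      if_neg (show m + 1 + 1 ≠ 1 by omega)]
    by_cases hm : m + 2 < r
    · rw [if_neg (by omega), hinit (m + 2) hm]
      ring
    · rw [if_pos (by omega), show m + 1 + 1 - r + r = m + 2 by omega, if_neg (by omega)]
      ring

theorem mk_neg_pow_tribonacci_shift_mul {r : ℕ} (hr : 2 ≤ r) {T : ℕ → ℤ}
    (hT0 : ∀ k, k < r - 1 → T k = 0) (hT1 : T (r - 1) = 1)
    (hTrec : ∀ n, r ≤ n → T n = T (n - 1) + T (n - 2) + T (n - r)) :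
    mk (fun k => (-1) ^ k * T (k + r)) * (1 + X - X ^ 2 - (-X) ^ r) = 1 - X + (-X) ^ (r - 1) := by
  have h := congrArg (rescale (-1 : ℤ)) (mk_tribonacci_shift_mul hr hT0 hT1 hTrec)
  simp only [map_mul, map_sub, map_add, map_one, map_pow, rescale_mk, rescale_X, map_neg,
    neg_one_mul, neg_sq] at h
  linear_combination h

theorem stmt_17 (r : ℕ) (hr : 3 ≤ r) (T : ℕ → ℤ)
    (hT0 : ∀ k, k < r - 1 → T k = 0) (hT1 : T (r - 1) = 1)
    (hTrec : ∀ n, r ≤ n → T n = T (n - 1) + T (n - 2) + T (n - r))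
    (n : ℕ) (hn : 2 ≤ n) :
    THdet (fun k => if k = 0 then 1 else T (k + r)) n =
      ∑ i ∈ Finset.range (n / (r - 1) + 1),
        (-1) ^ (r * i) * ((n - (r - 2) * i).choose i : ℤ) := by
  obtain ⟨k, rfl⟩ : ∃ k, r = k + 1 := ⟨r - 1, by omega⟩
  set a : ℕ → ℤ := fun j => if j = 0 then 1 else T (j + (k + 1))
  set D := mk (THdet a)
  set S := mk (diagChooseSum ((-1) ^ (k + 1) : ℤ) k)
  have hTr : T (k + 1) = 1 := by
    rw [hTrec (k + 1) le_rfl, hT0 (k + 1 - 2) (by omega), hT0 (k + 1 - (k + 1)) (by omega), hT1]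
    rfl
  have hD : mk (fun j => (-1) ^ j * T (j + (k + 1))) * D = 1 := by
    convert mk_neg_pow_mul_mk_THdet a rfl using 3
    ext (_ | j) <;> simp [a, hTr]
  have hE := mk_neg_pow_tribonacci_shift_mul (by omega) hT0 hT1 hTrec
  have hS : S * (1 - X - C ((-1) ^ (k + 1)) * X ^ k) = 1 := mk_diagChooseSum_mul _ (by omega)
  simp only [map_pow, map_neg, map_one] at hS
  rw [Nat.add_sub_cancel] at hE
  have hDS : D = S + X := by
    linear_combination (1 + X - X ^ 2 - (-X) ^ (k + 1)) * S * hD - D * S * hE + (X - D) * hS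
  have hn' := congrArg (coeff n) hDS
  simp only [D, S, map_add, coeff_mk, coeff_X, if_neg (show n ≠ 1 by omega), add_zero] at hn'
  rw [hn', diagChooseSum, Nat.add_sub_cancel, show k + 1 - 2 = k - 1 by omega]
  simp only [pow_mul]
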